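/- Soundness implies confinement for LDPC codes: Let H ∈ 𝔽₂^{m×n} and A ∈ 𝔽₂^{a×n} with H·Aᵀ = 0, and assume H is (t,f)-sound relative to A with f : ℕ → ℝ monotone increasing. Suppose every column of H has at most w nonzero entries, and let d_min = min{ |v| : v ∈ ker H, v ∉ rs(A) } (with d_min = ∞ if no such vector exists). Then for every positive integer t′ with w·t′ ≤ t and t′ + f(t) < d_min, the matrix H is (t′,f)-confined relative to A. -/

import Mathlib

open Matrix Kronecker

/-- The row space of a matrix over 𝔽₂: the span of its rows. -/
def rowSpace {m n : Type*} (A : Matrix m n (ZMod 2)) :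
    Submodule (ZMod 2) (n → ZMod 2) :=
  Submodule.span (ZMod 2) (Set.range A)

/-- The reduced weight of a vector `v` relative to a matrix `A`:
`‖v‖_A = min { |v+u| : u ∈ rs(A) }`. -/
noncomputable def redW {m n : Type*} [Fintype n] (A : Matrix m n (ZMod 2))
    (v : n → ZMod 2) : ℕ :=
  sInf {k | ∃ u ∈ rowSpace A, hammingNorm (v + u) = k}

/-- `H` is `(t,f)`-sound relative to `A`. -/
def Sound {m n a : Type*} [Fintype m] [Fintype n] (t : ℕ) (f : ℕ → ℝ)
    (H : Matrix m n (ZMod 2)) (A : Matrix a n (ZMod 2)) : Prop :=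
  ∀ s : m → ZMod 2, (∃ e, H.mulVec e = s) → hammingNorm s ≤ t →
    ∃ e, H.mulVec e = s ∧ (redW A e : ℝ) ≤ f (hammingNorm s)

/-- `H` is `(t,f)`-confined relative to `A`. -/
def Confined {m n a : Type*} [Fintype m] [Fintype n] (t : ℕ) (f : ℕ → ℝ)
    (H : Matrix m n (ZMod 2)) (A : Matrix a n (ZMod 2)) : Prop :=
  ∀ e : n → ZMod 2, redW A e ≤ t → (redW A e : ℝ) ≤ f (hammingNorm (H.mulVec e))

/-- Parity-check matrix of the length-`ℓ` repetition code. -/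
def repH (ℓ : ℕ) : Matrix (Fin (ℓ - 1)) (Fin ℓ) (ZMod 2) :=
  Matrix.of fun j i => if i.val = j.val ∨ i.val = j.val + 1 then 1 else 0

/-- Thickened X-check matrix `H̃_X = ( H_X⊗I_ℓ | I_{m_X}⊗hᵀ )`. -/
def thickHX {mX n : ℕ} (HX : Matrix (Fin mX) (Fin n) (ZMod 2)) (ℓ : ℕ) :
    Matrix (Fin mX × Fin ℓ) ((Fin n × Fin ℓ) ⊕ (Fin mX × Fin (ℓ - 1))) (ZMod 2) :=
  Matrix.fromCols (HX ⊗ₖ (1 : Matrix (Fin ℓ) (Fin ℓ) (ZMod 2)))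
    ((1 : Matrix (Fin mX) (Fin mX) (ZMod 2)) ⊗ₖ (repH ℓ)ᵀ)

/-- Thickened Z-check matrix `H̃_Z = [[ H_Z⊗I_ℓ , 0 ],[ I_n⊗h , H_Xᵀ⊗I_{ℓ−1} ]]`. -/
def thickHZ {mX mZ n : ℕ} (HX : Matrix (Fin mX) (Fin n) (ZMod 2))
    (HZ : Matrix (Fin mZ) (Fin n) (ZMod 2)) (ℓ : ℕ) :
    Matrix ((Fin mZ × Fin ℓ) ⊕ (Fin n × Fin (ℓ - 1)))
      ((Fin n × Fin ℓ) ⊕ (Fin mX × Fin (ℓ - 1))) (ZMod 2) :=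
  Matrix.fromBlocks (HZ ⊗ₖ (1 : Matrix (Fin ℓ) (Fin ℓ) (ZMod 2))) 0
    ((1 : Matrix (Fin n) (Fin n) (ZMod 2)) ⊗ₖ repH ℓ)
    (HXᵀ ⊗ₖ (1 : Matrix (Fin (ℓ - 1)) (Fin (ℓ - 1)) (ZMod 2)))

/-- Metacheck matrix `M̃_Z = ( I_{m_Z}⊗h | H_Z⊗I_{ℓ−1} )`. -/
def metaMZ {mZ n : ℕ} (HZ : Matrix (Fin mZ) (Fin n) (ZMod 2)) (ℓ : ℕ) :
    Matrix (Fin mZ × Fin (ℓ - 1))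
      ((Fin mZ × Fin ℓ) ⊕ (Fin n × Fin (ℓ - 1))) (ZMod 2) :=
  Matrix.fromCols ((1 : Matrix (Fin mZ) (Fin mZ) (ZMod 2)) ⊗ₖ repH ℓ)
    (HZ ⊗ₖ (1 : Matrix (Fin (ℓ - 1)) (Fin (ℓ - 1)) (ZMod 2)))

/-- Sheet-`τ` component of a vector on the thickened qubit space. -/
def sheet {n ℓ mX : ℕ} (τ : Fin ℓ)
    (v : (Fin n × Fin ℓ) ⊕ (Fin mX × Fin (ℓ - 1)) → ZMod 2) : Fin n → ZMod 2 :=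
  fun i => v (Sum.inl (i, τ))


/-!
Let `e` have `‖e‖_A ≤ t'` and take a minimum-weight representative of `e + rs(A)`: since
`H Aᵀ = 0` it has the same syndrome `s = He`, so column weights at most `w` give `|s| ≤ w t' ≤ t`.
Soundness yields `e₁` with `He₁ = s` and `‖e₁‖_A ≤ f(|s|) ≤ f(t)`. The difference of the
minimum-weight representatives of `e` and `e₁` lies in `ker H` and has weight at most
`t' + f(t) < d_min`, hence lies in `rs(A)`; so `‖e‖_A = ‖e₁‖_A ≤ f(|s|)`.
-/

theorem hammingNorm_sub_le {ι G : Type*} [Fintype ι] [AddCommGroup G] [DecidableEq G]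
    (x y : ι → G) : hammingNorm (x - y) ≤ hammingNorm x + hammingNorm y :=
  calc hammingNorm (x - y) = hammingDist y x := by rw [hammingDist_eq_hammingNorm, neg_add_eq_sub]
    _ ≤ hammingDist y 0 + hammingDist 0 x := hammingDist_triangle y 0 x
    _ = hammingNorm x + hammingNorm y := by
      rw [hammingDist_zero_right, hammingDist_zero_left, add_comm]

theorem hammingNorm_mulVec_le {m n R : Type*} [Fintype m] [Fintype n] [DecidableEq m]
    [NonUnitalNonAssocSemiring R] [DecidableEq R] (H : Matrix m n R) (w : ℕ)
    (hcol : ∀ j, hammingNorm (fun i => H i j) ≤ w) (e : n → R) :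
    hammingNorm (H *ᵥ e) ≤ w * hammingNorm e := by
  have hsupp : ({i | (H *ᵥ e) i ≠ 0} : Finset m) ⊆
      ({j | e j ≠ 0} : Finset n).biUnion fun j => ({i | H i j ≠ 0} : Finset m) := by
    intro i hi
    simp only [Finset.mem_filter, Finset.mem_univ, true_and] at hi
    obtain ⟨j, -, hj⟩ := Finset.exists_ne_zero_of_sum_ne_zero hi
    simp only [Finset.mem_biUnion, Finset.mem_filter, Finset.mem_univ, true_and]
    exact ⟨j, right_ne_zero_of_mul hj, left_ne_zero_of_mul hj⟩
  calc hammingNorm (H *ᵥ e) ≤ ∑ j ∈ {j | e j ≠ 0}, hammingNorm (fun i => H i j) :=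
        (Finset.card_le_card hsupp).trans Finset.card_biUnion_le
    _ ≤ ∑ j ∈ {j | e j ≠ 0}, w := Finset.sum_le_sum fun j _ => hcol j
    _ = w * hammingNorm e := by rw [Finset.sum_const, smul_eq_mul, mul_comm]; rfl

section ReducedWeight

variable {m n a : Type*} [Fintype n] (A : Matrix a n (ZMod 2))

theorem exists_hammingNorm_add_eq_redW (v : n → ZMod 2) :
    ∃ u ∈ rowSpace A, hammingNorm (v + u) = redW A v :=
  have hne : {k | ∃ u ∈ rowSpace A, hammingNorm (v + u) = k}.Nonempty :=
    ⟨hammingNorm v, 0, (rowSpace A).zero_mem, by rw [add_zero]⟩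
  Nat.sInf_mem hne

theorem redW_add_of_mem {u : n → ZMod 2} (hu : u ∈ rowSpace A) (v : n → ZMod 2) :
    redW A (v + u) = redW A v := by
  unfold redW
  congr 1
  ext k
  constructor
  · rintro ⟨u', hu', rfl⟩
    exact ⟨u + u', (rowSpace A).add_mem hu hu', by rw [add_assoc]⟩
  · rintro ⟨u', hu', rfl⟩
    exact ⟨u' - u, (rowSpace A).sub_mem hu' hu, by rw [add_add_sub_cancel]⟩

theorem redW_eq_of_sub_mem {x y : n → ZMod 2} (hxy : x - y ∈ rowSpace A) :
    redW A x = redW A y := by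
  rw [← redW_add_of_mem A hxy y, add_sub_cancel]

variable {A} (H : Matrix m n (ZMod 2))

theorem mulVec_eq_zero_of_mem_rowSpace (hHA : H * Aᵀ = 0) {u : n → ZMod 2}
    (hu : u ∈ rowSpace A) : H *ᵥ u = 0 := by
  refine Submodule.span_induction ?_ (H.mulVec_zero) (fun x y _ _ hx hy => ?_)
    (fun c x _ hx => ?_) hu
  · rintro _ ⟨i, rfl⟩
    funext j
    simpa [Matrix.mul_apply, Matrix.mulVec, dotProduct] using congrFun (congrFun hHA j) i
  · rw [Matrix.mulVec_add, hx, hy, add_zero]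
  · rw [Matrix.mulVec_smul, hx, smul_zero]

theorem hammingNorm_mulVec_le_redW [Fintype m] [DecidableEq m] (hHA : H * Aᵀ = 0) (w : ℕ)
    (hcol : ∀ j, hammingNorm (fun i => H i j) ≤ w) (e : n → ZMod 2) :
    hammingNorm (H *ᵥ e) ≤ w * redW A e := by
  obtain ⟨u, hu, hnorm⟩ := exists_hammingNorm_add_eq_redW A e
  calc hammingNorm (H *ᵥ e) = hammingNorm (H *ᵥ (e + u)) := by
        rw [Matrix.mulVec_add, mulVec_eq_zero_of_mem_rowSpace H hHA hu, add_zero]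
    _ ≤ w * redW A e := hnorm ▸ hammingNorm_mulVec_le H w hcol (e + u)

theorem sub_mem_rowSpace_of_mulVec_eq (hHA : H * Aᵀ = 0) {D : ℝ}
    (hdist : ∀ v, H *ᵥ v = 0 → v ∉ rowSpace A → D < hammingNorm v) {x y : n → ZMod 2}
    (hxy : H *ᵥ x = H *ᵥ y) (hred : (redW A x : ℝ) + redW A y ≤ D) :
    x - y ∈ rowSpace A := by
  obtain ⟨u, hu, hxu⟩ := exists_hammingNorm_add_eq_redW A x
  obtain ⟨u', hu', hyu'⟩ := exists_hammingNorm_add_eq_redW A y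
  have hker : H *ᵥ ((x + u) - (y + u')) = 0 := by
    simp only [Matrix.mulVec_sub, Matrix.mulVec_add, hxy,
      mulVec_eq_zero_of_mem_rowSpace H hHA hu, mulVec_eq_zero_of_mem_rowSpace H hHA hu', sub_self]
  have hmem : (x + u) - (y + u') ∈ rowSpace A := by
    by_contra hnot
    have hlt := hdist _ hker hnot
    have hle : hammingNorm ((x + u) - (y + u')) ≤ redW A x + redW A y :=
      hxu ▸ hyu' ▸ hammingNorm_sub_le _ _
    exact (hlt.trans_le (by exact_mod_cast hle)).not_ge hred
  have hrw : x - y = ((x + u) - (y + u')) - u + u' := by abel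
  rw [hrw]
  exact (rowSpace A).add_mem ((rowSpace A).sub_mem hmem hu) hu'

end ReducedWeight

theorem soundness_implies_confinement_general
    {m n a : ℕ}
    (H : Matrix (Fin m) (Fin n) (ZMod 2))
    (A : Matrix (Fin a) (Fin n) (ZMod 2))
    (hHA : H * Aᵀ = 0)
    (t : ℕ) (f : ℕ → ℝ) (hf : Monotone f)
    (hsound : Sound t f H A)
    (w : ℕ) (hcol : ∀ j : Fin n, hammingNorm (fun i => H i j) ≤ w)
    (t' : ℕ) (hwt : w * t' ≤ t)
    (hdmin : ∀ v : Fin n → ZMod 2, H.mulVec v = 0 → v ∉ rowSpace A →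
      (t' : ℝ) + f t < (hammingNorm v : ℝ)) :
    Confined t' f H A := by
  intro e he
  have hsyn : hammingNorm (H *ᵥ e) ≤ t :=
    (hammingNorm_mulVec_le_redW H hHA w hcol e).trans ((Nat.mul_le_mul_left w he).trans hwt)
  obtain ⟨e₁, hHe₁, hred₁⟩ := hsound _ ⟨e, rfl⟩ hsyn
  have hsum : (redW A e : ℝ) + redW A e₁ ≤ t' + f t :=
    add_le_add (by exact_mod_cast he) (hred₁.trans (hf hsyn))
  rw [redW_eq_of_sub_mem A (sub_mem_rowSpace_of_mulVec_eq H hHA hdmin hHe₁.symm hsum)]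
  exact hred₁

theorem soundness_implies_confinement
    {m n a : ℕ}
    (H : Matrix (Fin m) (Fin n) (ZMod 2))
    (A : Matrix (Fin a) (Fin n) (ZMod 2))
    (hHA : H * Aᵀ = 0)
    (t : ℕ) (ht : 0 < t) (f : ℕ → ℝ) (hf : Monotone f)
    (hsound : Sound t f H A)
    (w : ℕ) (hcol : ∀ j : Fin n, hammingNorm (fun i => H i j) ≤ w)
    (t' : ℕ) (ht' : 0 < t') (hwt : w * t' ≤ t)
    (hdmin : ∀ v : Fin n → ZMod 2, H.mulVec v = 0 → v ∉ rowSpace A →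
      (t' : ℝ) + f t < (hammingNorm v : ℝ)) :
    Confined t' f H A :=
  soundness_implies_confinement_general H A hHA t f hf hsound w hcol t' hwt hdmin
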